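/- arXiv:2005.10199 — 4 statements merged into one kernel-verified Lean document; each statement's English description precedes it below -/
import Mathlib

section
/- Weighted Matrix Tree Theorem: For a connected graph G = (N, E) with nodes N = {1, …, n}, positive edge weights B_l > 0, weighted Laplacian L = C·diag(B)·C^T (where C is the signed incidence matrix), and reduced Laplacian L̄ obtained from L by deleting the n-th row and column, one has det(L̄) = Σ_{F ∈ T_E} β(F), where T_E is the set of edge subsets of E forming spanning trees of G and β(F) = Π_{l∈F} B_l. -/
/-!
Cauchy–Binet applied to `L̄ = C̄ diag(B) C̄ᵀ`, where `C̄` is the incidence matrix without the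
row of the reference node, gives `det L̄ = ∑_S β(S) det(C̄_S)²` over the `n`-element edge sets
`S`. Incidence matrices are totally unimodular, so `det(C̄_S)² ∈ {0, 1}`, and `det(C̄_S) ≠ 0`
exactly when `S` connects the graph: a left kernel vector of `C̄_S` is a node potential,
vanishing at the reference node, that takes equal values at both ends of every edge of `S`.
-/

open Matrix Finset

variable {n m : ℕ}

/-- Nodes `a` and `b` are joined by some edge in the edge set `S`. -/
def edgeAdj (src tgt : Fin m → Fin (n + 1)) (S : Finset (Fin m)) (a b : Fin (n + 1)) : Prop :=
  ∃ e ∈ S, (src e = a ∧ tgt e = b) ∨ (src e = b ∧ tgt e = a)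

/-- The spanning subgraph with edge set `S` is connected. -/
def ConnectedOn (src tgt : Fin m → Fin (n + 1)) (S : Finset (Fin m)) : Prop :=
  ∀ a b : Fin (n + 1), Relation.ReflTransGen (edgeAdj src tgt S) a b

/-- `F` is the edge set of a spanning tree of the graph on `n + 1` nodes
(a connected spanning subgraph with exactly `n` edges). -/
def IsSpanningTree (src tgt : Fin m → Fin (n + 1)) (F : Finset (Fin m)) : Prop :=
  F.card = n ∧ ConnectedOn src tgt F

/-- Connectivity within the vertex set `V`, using only edges of `S` traversed inside `V`. -/
def ConnWithin (src tgt : Fin m → Fin (n + 1)) (S : Finset (Fin m))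
    (V : Finset (Fin (n + 1))) : Prop :=
  ∀ a ∈ V, ∀ b ∈ V,
    Relation.ReflTransGen (fun x y => x ∈ V ∧ y ∈ V ∧ edgeAdj src tgt S x y) a b

/-- `F` is a spanning forest of exactly two vertex-disjoint trees, one containing all
nodes in `N1` and the other containing all nodes in `N2`. -/
def IsSpanningForest2 (src tgt : Fin m → Fin (n + 1)) (F : Finset (Fin m))
    (N1 N2 : Finset (Fin (n + 1))) : Prop :=
  ∃ V1 V2 : Finset (Fin (n + 1)),
    Disjoint V1 V2 ∧ V1 ∪ V2 = Finset.univ ∧ V1.Nonempty ∧ V2.Nonempty ∧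
      N1 ⊆ V1 ∧ N2 ⊆ V2 ∧ F.card + 1 = n ∧
      (∀ e ∈ F, (src e ∈ V1 ∧ tgt e ∈ V1) ∨ (src e ∈ V2 ∧ tgt e ∈ V2)) ∧
      ConnWithin src tgt F V1 ∧ ConnWithin src tgt F V2

/-- The (signed) incidence matrix `C`. -/
def incMat (src tgt : Fin m → Fin (n + 1)) : Matrix (Fin (n + 1)) (Fin m) ℝ :=
  Matrix.of fun i e => if src e = i then 1 else if tgt e = i then -1 else 0

/-- The weighted Laplacian `L = C ⬝ diag B ⬝ Cᵀ`. -/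
noncomputable def lap (src tgt : Fin m → Fin (n + 1)) (B : Fin m → ℝ) :
    Matrix (Fin (n + 1)) (Fin (n + 1)) ℝ :=
  incMat src tgt * Matrix.diagonal B * (incMat src tgt)ᵀ

/-- The reduced Laplacian: delete the row and column of the reference node `Fin.last n`. -/
noncomputable def rlap (src tgt : Fin m → Fin (n + 1)) (B : Fin m → ℝ) :
    Matrix (Fin n) (Fin n) ℝ :=
  (lap src tgt B).submatrix Fin.castSucc Fin.castSucc

/-- The inverse of the reduced Laplacian, padded with a zero row and column at the
reference node. -/
noncomputable def Amat (src tgt : Fin m → Fin (n + 1)) (B : Fin m → ℝ) :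
    Matrix (Fin (n + 1)) (Fin (n + 1)) ℝ :=
  Matrix.of fun i j =>
    if hi : i = Fin.last n then 0
    else if hj : j = Fin.last n then 0
    else (rlap src tgt B)⁻¹ (i.castPred hi) (j.castPred hj)

open Classical in
/-- `Σ_{F ∈ T_E} β(F)`: total weight of all spanning trees. -/
noncomputable def treeSum (src tgt : Fin m → Fin (n + 1)) (B : Fin m → ℝ) : ℝ :=
  ∑ F ∈ Finset.univ.filter (fun F => IsSpanningTree src tgt F), ∏ e ∈ F, B e

open Classical in
/-- `Σ_{F ∈ T_{−l}} β(F)`: total weight of all spanning trees avoiding the edge `l`. -/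
noncomputable def treeSumAvoiding (src tgt : Fin m → Fin (n + 1)) (B : Fin m → ℝ)
    (l : Fin m) : ℝ :=
  ∑ F ∈ Finset.univ.filter (fun F => IsSpanningTree src tgt F ∧ l ∉ F), ∏ e ∈ F, B e

open Classical in
/-- `Σ_{F ∈ T(N1, N2)} β(F)`: total weight of two-tree spanning forests separating
`N1` from `N2`. -/
noncomputable def forestSum (src tgt : Fin m → Fin (n + 1)) (B : Fin m → ℝ)
    (N1 N2 : Finset (Fin (n + 1))) : ℝ :=
  ∑ F ∈ Finset.univ.filter (fun F => IsSpanningForest2 src tgt F N1 N2), ∏ e ∈ F, B e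

/-- The power transfer distribution factor `D_{l, î ĵ}`. -/
noncomputable def ptdf (src tgt : Fin m → Fin (n + 1)) (B : Fin m → ℝ) (l : Fin m)
    (ihat jhat : Fin (n + 1)) : ℝ :=
  B l * (Amat src tgt B (src l) ihat + Amat src tgt B (tgt l) jhat
    - Amat src tgt B (src l) jhat - Amat src tgt B (tgt l) ihat)

/-- An edge is a bridge if its removal disconnects the graph. -/
def IsBridge (src tgt : Fin m → Fin (n + 1)) (l : Fin m) : Prop :=
  ¬ ConnectedOn src tgt (Finset.univ.erase l)

/-- There is a simple cycle (distinct edges, distinct vertices) containing both edges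
`l` and `lhat`. -/
def ExistsSimpleCycleThrough (src tgt : Fin m → Fin (n + 1)) (l lhat : Fin m) : Prop :=
  ∃ (k : ℕ) (es : Fin (k + 2) → Fin m) (vs : Fin (k + 2) → Fin (n + 1)),
    Function.Injective es ∧ Function.Injective vs ∧
      (∀ t, (src (es t) = vs t ∧ tgt (es t) = vs (t + 1)) ∨
        (src (es t) = vs (t + 1) ∧ tgt (es t) = vs t)) ∧
      (∃ t, es t = l) ∧ (∃ t, es t = lhat)

/-- The incidence submatrix `C_{−F}` on the surviving edges. -/
def Cminus (src tgt : Fin m → Fin (n + 1)) (F : Finset (Fin m)) :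
    Matrix (Fin (n + 1)) {e : Fin m // e ∉ F} ℝ :=
  (incMat src tgt).submatrix id (fun e => e.val)

/-- The incidence submatrix `C_F` on the removed edges. -/
def Cof (src tgt : Fin m → Fin (n + 1)) (F : Finset (Fin m)) :
    Matrix (Fin (n + 1)) {e : Fin m // e ∈ F} ℝ :=
  (incMat src tgt).submatrix id (fun e => e.val)

/-- The diagonal susceptance submatrix `B_{−F}` on the surviving edges. -/
noncomputable def Bminus (B : Fin m → ℝ) (F : Finset (Fin m)) :
    Matrix {e : Fin m // e ∉ F} {e : Fin m // e ∉ F} ℝ :=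
  Matrix.diagonal fun e => B e.val

/-- The diagonal susceptance submatrix `B_F` on the removed edges. -/
noncomputable def Bof (B : Fin m → ℝ) (F : Finset (Fin m)) :
    Matrix {e : Fin m // e ∈ F} {e : Fin m // e ∈ F} ℝ :=
  Matrix.diagonal fun e => B e.val

/-- The post-contingency Laplacian `L_{−F} = C_{−F} ⬝ B_{−F} ⬝ C_{−F}ᵀ`. -/
noncomputable def lapMinus (src tgt : Fin m → Fin (n + 1)) (B : Fin m → ℝ)
    (F : Finset (Fin m)) : Matrix (Fin (n + 1)) (Fin (n + 1)) ℝ :=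
  Cminus src tgt F * Bminus B F * (Cminus src tgt F)ᵀ

/-- The padded inverse `A_{−F}` of the post-contingency reduced Laplacian. -/
noncomputable def AmatMinus (src tgt : Fin m → Fin (n + 1)) (B : Fin m → ℝ)
    (F : Finset (Fin m)) : Matrix (Fin (n + 1)) (Fin (n + 1)) ℝ :=
  Matrix.of fun i j =>
    if hi : i = Fin.last n then 0
    else if hj : j = Fin.last n then 0
    else ((lapMinus src tgt B F).submatrix Fin.castSucc Fin.castSucc)⁻¹
      (i.castPred hi) (j.castPred hj)

/-- The pre-contingency branch flow vector `f = diag(B) ⬝ Cᵀ ⬝ A ⬝ p`. -/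
noncomputable def flowPre (src tgt : Fin m → Fin (n + 1)) (B : Fin m → ℝ)
    (p : Fin (n + 1) → ℝ) : Fin m → ℝ :=
  (Matrix.diagonal B * (incMat src tgt)ᵀ * Amat src tgt B) *ᵥ p

/-- The post-contingency branch flow vector `f̃_{−F} = B_{−F} ⬝ C_{−F}ᵀ ⬝ A_{−F} ⬝ p`
on the surviving edges. -/
noncomputable def flowPost (src tgt : Fin m → Fin (n + 1)) (B : Fin m → ℝ)
    (F : Finset (Fin m)) (p : Fin (n + 1) → ℝ) : {e : Fin m // e ∉ F} → ℝ :=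
  (Bminus B F * (Cminus src tgt F)ᵀ * AmatMinus src tgt B F) *ᵥ p

/-- The generalized line outage distribution factor matrix
`K^F = B_{−F} ⬝ C_{−F}ᵀ ⬝ A_{−F} ⬝ C_F`. -/
noncomputable def glodf (src tgt : Fin m → Fin (n + 1)) (B : Fin m → ℝ)
    (F : Finset (Fin m)) : Matrix {e : Fin m // e ∉ F} {e : Fin m // e ∈ F} ℝ :=
  Bminus B F * (Cminus src tgt F)ᵀ * AmatMinus src tgt B F * Cof src tgt F

/-- The PTDF submatrix `D_{FF} = B_F ⬝ C_Fᵀ ⬝ A ⬝ C_F`. -/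
noncomputable def Dff (src tgt : Fin m → Fin (n + 1)) (B : Fin m → ℝ)
    (F : Finset (Fin m)) : Matrix {e : Fin m // e ∈ F} {e : Fin m // e ∈ F} ℝ :=
  Bof B F * (Cof src tgt F)ᵀ * Amat src tgt B * Cof src tgt F

/-- The PTDF submatrix `D_{−FF} = B_{−F} ⬝ C_{−F}ᵀ ⬝ A ⬝ C_F`. -/
noncomputable def DmFF (src tgt : Fin m → Fin (n + 1)) (B : Fin m → ℝ)
    (F : Finset (Fin m)) : Matrix {e : Fin m // e ∉ F} {e : Fin m // e ∈ F} ℝ :=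
  Bminus B F * (Cminus src tgt F)ᵀ * Amat src tgt B * Cof src tgt F

namespace Matrix

variable {R : Type*} [CommRing R]

lemma det_eq_zero_of_sum_rows_eq_zero {k : Type*} [Fintype k] [DecidableEq k] [Nonempty k]
    (M : Matrix k k R) (h : ∀ j, ∑ i, M i j = 0) : M.det = 0 := by
  have hvec : (fun _ => (1 : R)) ᵥ* M = 0 := funext fun j => by simp [vecMul, dotProduct, h j]
  have hdet := congrArg (· ᵥ* M.adjugate) hvec
  simp only [vecMul_vecMul, mul_adjugate, zero_vecMul, vecMul_smul, vecMul_one] at hdet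
  simpa using congrFun hdet (Classical.arbitrary k)

lemma mul_mem_range_signType_cast {a b : R} (ha : a ∈ Set.range SignType.cast)
    (hb : b ∈ Set.range SignType.cast) : a * b ∈ Set.range SignType.cast := by
  obtain ⟨s, rfl⟩ := ha
  obtain ⟨t, rfl⟩ := hb
  exact ⟨s * t, SignType.coe_mul s t⟩

variable {ι κ : Type*}

structure IsIncidenceLike (A : Matrix ι κ R) : Prop where
  entry_eq : ∀ i j, A i j = 0 ∨ A i j = 1 ∨ A i j = -1
  eq_of_eq_one : ∀ i i' j, A i j = 1 → A i' j = 1 → i = i'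
  eq_of_eq_neg_one : ∀ i i' j, A i j = -1 → A i' j = -1 → i = i'

variable {A : Matrix ι κ R}

lemma IsIncidenceLike.submatrix (hA : A.IsIncidenceLike) {ι' κ' : Type*} {f : ι' → ι}
    (hf : f.Injective) (g : κ' → κ) : (A.submatrix f g).IsIncidenceLike where
  entry_eq _ _ := hA.entry_eq _ _
  eq_of_eq_one _ _ _ h h' := hf (hA.eq_of_eq_one _ _ _ h h')
  eq_of_eq_neg_one _ _ _ h h' := hf (hA.eq_of_eq_neg_one _ _ _ h h')

lemma IsIncidenceLike.sum_col_eq_zero [Fintype ι] (hA : A.IsIncidenceLike)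
    {i₁ i₂ : ι} {j : κ} (hne : i₁ ≠ i₂) (h₁ : A i₁ j = 1) (h₂ : A i₂ j = -1) :
    ∑ i, A i j = 0 := by
  rw [Finset.sum_eq_add i₁ i₂ hne _ (by simp) (by simp), h₁, h₂, add_neg_cancel]
  rintro i - ⟨hi₁, hi₂⟩
  rcases hA.entry_eq i j with h | h | h
  · exact h
  · exact absurd (hA.eq_of_eq_one _ _ _ h h₁) hi₁
  · exact absurd (hA.eq_of_eq_neg_one _ _ _ h h₂) hi₂

lemma IsIncidenceLike.eq_of_ne_zero_of_ne_zero (hA : A.IsIncidenceLike) {j : κ}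
    (hj : ∀ i₁ i₂, i₁ ≠ i₂ → A i₁ j = 1 → A i₂ j ≠ -1) {i i' : ι}
    (hi : A i j ≠ 0) (hi' : A i' j ≠ 0) : i = i' := by
  by_contra hne
  rcases hA.entry_eq i j with h | h | h <;> rcases hA.entry_eq i' j with h' | h' | h'
  all_goals first
    | exact hi h | exact hi' h'
    | exact hne (hA.eq_of_eq_one _ _ _ h h') | exact hne (hA.eq_of_eq_neg_one _ _ _ h h')
    | exact hj _ _ hne h h' | exact hj _ _ (Ne.symm hne) h' h

lemma IsIncidenceLike.det_mem_range {k : ℕ} {M : Matrix (Fin k) (Fin k) R}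
    (hM : M.IsIncidenceLike) : M.det ∈ Set.range SignType.cast := by
  induction k with
  | zero => exact ⟨1, by simp⟩
  | succ k ih =>
    by_cases hbal : ∀ j, ∃ i₁ i₂, i₁ ≠ i₂ ∧ M i₁ j = 1 ∧ M i₂ j = -1
    · refine ⟨0, (det_eq_zero_of_sum_rows_eq_zero M fun j => ?_).symm⟩
      obtain ⟨i₁, i₂, hne, h₁, h₂⟩ := hbal j
      exact hM.sum_col_eq_zero hne h₁ h₂
    · push Not at hbal
      obtain ⟨j, hj⟩ := hbal
      by_cases hzero : ∀ i, M i j = 0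
      · exact ⟨0, (det_eq_zero_of_column_eq_zero j hzero).symm⟩
      push Not at hzero
      obtain ⟨i₀, hi₀⟩ := hzero
      have hcol : ∀ i ≠ i₀, M i j = 0 := fun i hi =>
        by_contra fun h => hi (hM.eq_of_ne_zero_of_ne_zero hj h hi₀)
      have hentry : M i₀ j ∈ Set.range SignType.cast := by
        rcases hM.entry_eq i₀ j with h | h | h <;> rw [h]
        exacts [⟨0, rfl⟩, ⟨1, rfl⟩, ⟨-1, rfl⟩]
      rw [det_succ_column M j, sum_eq_single i₀ (fun i _ hi => by rw [hcol i hi]; simp) (by simp)]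
      exact mul_mem_range_signType_cast
        (mul_mem_range_signType_cast ⟨(-1) ^ (i₀ + j : ℕ), by simp⟩ hentry)
        (ih (hM.submatrix Fin.succAbove_right_injective _))

lemma IsIncidenceLike.isTotallyUnimodular (hA : A.IsIncidenceLike) : A.IsTotallyUnimodular :=
  fun _ _ _ hf _ => (hA.submatrix hf _).det_mem_range

end Matrix

namespace Finset

lemma sum_filter_image_eq_sum_perm {ι M : Type*} [Fintype ι] [LinearOrder ι]
    [AddCommMonoid M] {p : ℕ} (S : Finset ι) (hS : S.card = p) (F : (Fin p → ι) → M) :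
    ∑ f with univ.image f = S, F f = ∑ σ : Equiv.Perm (Fin p), F (S.orderEmbOfFin hS ∘ σ) := by
  set g := S.orderEmbOfFin hS
  symm
  refine sum_bij (fun σ _ => g ∘ σ) (fun σ _ => ?_) (fun σ _ τ _ h => ?_) (fun f hf => ?_)
    (fun _ _ => rfl)
  · simp [image_comp, image_univ_equiv, g, image_orderEmbOfFin_univ]
  · exact Equiv.ext fun k => g.injective (congrFun h k)
  · simp only [mem_filter, mem_univ, true_and] at hf
    have hinj : f.Injective := by
      rw [← Set.injOn_univ, ← coe_univ, ← card_image_iff, hf, hS, card_univ, Fintype.card_fin]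
    have hmem (k : Fin p) : f k ∈ S := hf ▸ mem_image_of_mem f (mem_univ k)
    set σ : Fin p → Fin p := fun k => (S.orderIsoOfFin hS).symm ⟨f k, hmem k⟩
    have hgσ : g ∘ σ = f := funext fun k => by
      simp [g, σ, ← coe_orderIsoOfFin_apply]
    refine ⟨Equiv.ofBijective σ (Finite.injective_iff_bijective.mp ?_), mem_univ _, hgσ⟩
    exact fun a b h => hinj (by rw [← hgσ, Function.comp_apply, h]; rfl)

end Finset

namespace Matrix

variable {R : Type*} [CommRing R] {ι : Type*} [Fintype ι]

lemma det_mul_eq_sum_prod_mul_det_submatrix {κ : Type*} [Fintype κ] [DecidableEq κ]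
    (A : Matrix κ ι R) (B : Matrix ι κ R) :
    (A * B).det = ∑ f : κ → ι, (∏ i, B (f i) i) * (A.submatrix id f).det := by
  simp only [det_apply', mul_apply, prod_univ_sum, Fintype.piFinset_univ, mul_sum]
  rw [sum_comm]
  refine sum_congr rfl fun f _ => sum_congr rfl fun σ _ => ?_
  simp only [submatrix_apply, id_eq, prod_mul_distrib]
  ring

variable [LinearOrder ι] {p : ℕ}

theorem det_mul_cauchy_binet (A : Matrix (Fin p) ι R) (B : Matrix ι (Fin p) R) :
    (A * B).det = ∑ S : Finset ι, if h : S.card = p then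
      (A.submatrix id (S.orderEmbOfFin h)).det * (B.submatrix (S.orderEmbOfFin h) id).det
    else 0 := by
  rw [det_mul_eq_sum_prod_mul_det_submatrix, ← sum_fiberwise univ (fun f => univ.image f)]
  refine sum_congr rfl fun S _ => ?_
  split_ifs with hS
  · rw [sum_filter_image_eq_sum_perm S hS, det_apply' (B.submatrix _ id), mul_sum]
    refine sum_congr rfl fun σ _ => ?_
    rw [show A.submatrix id (S.orderEmbOfFin hS ∘ σ)
        = (A.submatrix id (S.orderEmbOfFin hS)).submatrix id σ from rfl, det_permute']
    simp only [submatrix_apply, id_eq, Function.comp_apply]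
    ring
  · refine sum_eq_zero fun f hf => ?_
    simp only [mem_filter, mem_univ, true_and] at hf
    obtain ⟨a, b, hab, hne⟩ := Function.not_injective_iff.mp fun hinj => hS <| by
      rw [← hf, card_image_of_injective _ hinj, card_univ, Fintype.card_fin]
    rw [det_zero_of_column_eq hne fun i => by simp [hab], mul_zero]

theorem det_mul_diagonal_mul_transpose (A : Matrix (Fin p) ι R) (d : ι → R) :
    (A * diagonal d * Aᵀ).det = ∑ S : Finset ι, if h : S.card = p then
      (∏ i ∈ S, d i) * (A.submatrix id (S.orderEmbOfFin h)).det ^ 2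
    else 0 := by
  rw [Matrix.mul_assoc, det_mul_cauchy_binet]
  refine sum_congr rfl fun S _ => dite_congr rfl (fun hS => ?_) fun _ => rfl
  have hsub : (diagonal d * Aᵀ).submatrix (S.orderEmbOfFin hS) id
      = diagonal (d ∘ S.orderEmbOfFin hS) * (A.submatrix id (S.orderEmbOfFin hS))ᵀ := by
    ext; simp [diagonal_mul]
  have hprod : ∏ k, d (S.orderEmbOfFin hS k) = ∏ i ∈ S, d i := by
    simpa using (prod_map univ (S.orderEmbOfFin hS).toEmbedding d).symm
  rw [hsub, det_mul, det_diagonal, det_transpose, Function.comp_def, hprod]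
  ring

end Matrix

instance (src tgt : Fin m → Fin (n + 1)) (S : Finset (Fin m)) :
    Std.Symm (edgeAdj src tgt S) where
  symm _ _ := fun ⟨e, he, h⟩ => ⟨e, he, h.symm⟩

lemma eq_of_reflTransGen_edgeAdj {src tgt : Fin m → Fin (n + 1)} {S : Finset (Fin m)}
    {y : Fin (n + 1) → ℝ} (hy : ∀ e ∈ S, y (src e) = y (tgt e)) {a b : Fin (n + 1)}
    (hab : Relation.ReflTransGen (edgeAdj src tgt S) a b) : y a = y b := by
  induction hab with
  | refl => rfl
  | tail _ hbc ih =>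
    obtain ⟨e, he, ⟨rfl, rfl⟩ | ⟨rfl, rfl⟩⟩ := hbc
    exacts [ih.trans (hy e he), ih.trans (hy e he).symm]

lemma incMat_eq_one_iff {src tgt : Fin m → Fin (n + 1)} {i : Fin (n + 1)} {e : Fin m} :
    incMat src tgt i e = 1 ↔ src e = i := by
  simp only [incMat, of_apply]
  split_ifs <;> norm_num [*]

lemma incMat_eq_neg_one_iff {src tgt : Fin m → Fin (n + 1)} {i : Fin (n + 1)} {e : Fin m} :
    incMat src tgt i e = -1 ↔ src e ≠ i ∧ tgt e = i := by
  simp only [incMat, of_apply]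
  split_ifs <;> norm_num [*]

lemma incMat_isIncidenceLike (src tgt : Fin m → Fin (n + 1)) :
    (incMat src tgt).IsIncidenceLike where
  entry_eq i e := by simp only [incMat, of_apply]; split_ifs <;> simp
  eq_of_eq_one _ _ _ h h' := (incMat_eq_one_iff.mp h).symm.trans (incMat_eq_one_iff.mp h')
  eq_of_eq_neg_one _ _ _ h h' :=
    (incMat_eq_neg_one_iff.mp h).2.symm.trans (incMat_eq_neg_one_iff.mp h').2

lemma vecMul_incMat {src tgt : Fin m → Fin (n + 1)} (hsimple : ∀ e, src e ≠ tgt e)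
    (y : Fin (n + 1) → ℝ) : y ᵥ* incMat src tgt = fun e => y (src e) - y (tgt e) := by
  funext e
  have hcol (i : Fin (n + 1)) :
      incMat src tgt i e = (if src e = i then 1 else 0) - (if tgt e = i then 1 else 0) := by
    have := hsimple e
    simp only [incMat, of_apply]; split_ifs <;> simp_all
  simp [vecMul, dotProduct, hcol, mul_sub]

def reducedIncMat (src tgt : Fin m → Fin (n + 1)) : Matrix (Fin n) (Fin m) ℝ :=
  (incMat src tgt).submatrix Fin.castSucc id

lemma rlap_eq_reducedIncMat (src tgt : Fin m → Fin (n + 1)) (B : Fin m → ℝ) :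
    rlap src tgt B = reducedIncMat src tgt * diagonal B * (reducedIncMat src tgt)ᵀ := by
  rw [rlap, lap, submatrix_mul _ _ _ id _ Function.bijective_id,
    submatrix_mul _ _ _ id _ Function.bijective_id]
  rfl

lemma vecMul_reducedIncMat {src tgt : Fin m → Fin (n + 1)} (hsimple : ∀ e, src e ≠ tgt e)
    {y : Fin (n + 1) → ℝ} (hy : y (Fin.last n) = 0) :
    (y ∘ Fin.castSucc) ᵥ* reducedIncMat src tgt = fun e => y (src e) - y (tgt e) := by
  rw [← vecMul_incMat hsimple]
  funext e
  simp [vecMul, dotProduct, reducedIncMat, Fin.sum_univ_castSucc, hy]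

lemma vecMul_submatrix_reducedIncMat_eq_zero_iff {src tgt : Fin m → Fin (n + 1)}
    (hsimple : ∀ e, src e ≠ tgt e) {S : Finset (Fin m)} (hS : S.card = n)
    {y : Fin (n + 1) → ℝ} (hy : y (Fin.last n) = 0) :
    (y ∘ Fin.castSucc) ᵥ* (reducedIncMat src tgt).submatrix id (S.orderEmbOfFin hS) = 0 ↔
      ∀ e ∈ S, y (src e) = y (tgt e) := by
  have hvec : (y ∘ Fin.castSucc) ᵥ* (reducedIncMat src tgt).submatrix id (S.orderEmbOfFin hS)
      = fun k => y (src (S.orderEmbOfFin hS k)) - y (tgt (S.orderEmbOfFin hS k)) := by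
    ext k
    exact congrFun (vecMul_reducedIncMat hsimple hy) _
  rw [hvec, funext_iff]
  simp only [Pi.zero_apply, sub_eq_zero]
  constructor
  · intro h e he
    obtain ⟨k, rfl⟩ : e ∈ Set.range (S.orderEmbOfFin hS) := by simpa using he
    exact h k
  · exact fun h k => h _ (S.orderEmbOfFin_mem hS k)

lemma det_submatrix_reducedIncMat_eq_zero_of_not_connectedOn {src tgt : Fin m → Fin (n + 1)}
    (hsimple : ∀ e, src e ≠ tgt e) {S : Finset (Fin m)} (hS : S.card = n)
    (hS_conn : ¬ ConnectedOn src tgt S) :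
    ((reducedIncMat src tgt).submatrix id (S.orderEmbOfFin hS)).det = 0 := by
  classical
  let R v := Relation.ReflTransGen (edgeAdj src tgt S) v (Fin.last n)
  obtain ⟨v, hv⟩ : ∃ v, ¬ R v := by
    by_contra! h
    exact hS_conn fun a b => (h a).trans (symm (h b))
  let y v := if R v then (0 : ℝ) else 1
  have hv_last : v ≠ Fin.last n := by rintro rfl; exact hv .refl
  refine exists_vecMul_eq_zero_iff.mp ⟨y ∘ Fin.castSucc, fun h => ?_, ?_⟩
  · simpa [y, hv] using congrFun h (v.castPred hv_last)
  refine (vecMul_submatrix_reducedIncMat_eq_zero_iff hsimple hS (if_pos .refl)).mpr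
    fun e he => ?_
  have hadj : edgeAdj src tgt S (src e) (tgt e) := ⟨e, he, .inl ⟨rfl, rfl⟩⟩
  have hR : R (src e) ↔ R (tgt e) := ⟨.head (symm hadj), .head hadj⟩
  simp only [y, hR]

lemma det_submatrix_reducedIncMat_ne_zero_of_connectedOn {src tgt : Fin m → Fin (n + 1)}
    (hsimple : ∀ e, src e ≠ tgt e) {S : Finset (Fin m)} (hS : S.card = n)
    (hS_conn : ConnectedOn src tgt S) :
    ((reducedIncMat src tgt).submatrix id (S.orderEmbOfFin hS)).det ≠ 0 := by
  intro hdet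
  obtain ⟨x, hx, hxS⟩ := exists_vecMul_eq_zero_iff.mpr hdet
  let y : Fin (n + 1) → ℝ := Fin.snoc (α := fun _ => ℝ) x 0
  have hy : y ∘ Fin.castSucc = x := funext fun i => by simp [y]
  have hy_last : y (Fin.last n) = 0 := by simp [y]
  rw [← hy, vecMul_submatrix_reducedIncMat_eq_zero_iff hsimple hS hy_last] at hxS
  refine hx (funext fun i => ?_)
  rw [← hy, Function.comp_apply, eq_of_reflTransGen_edgeAdj hxS (hS_conn _ (Fin.last n)),
    hy_last, Pi.zero_apply]

lemma det_submatrix_reducedIncMat_sq {src tgt : Fin m → Fin (n + 1)}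
    (hsimple : ∀ e, src e ≠ tgt e) {S : Finset (Fin m)} (hS : S.card = n)
    [Decidable (ConnectedOn src tgt S)] :
    ((reducedIncMat src tgt).submatrix id (S.orderEmbOfFin hS)).det ^ 2 =
      if ConnectedOn src tgt S then 1 else 0 := by
  split_ifs with hS_conn
  · have hne := det_submatrix_reducedIncMat_ne_zero_of_connectedOn hsimple hS hS_conn
    have hTU : (reducedIncMat src tgt).IsTotallyUnimodular :=
      (incMat_isIncidenceLike src tgt).isTotallyUnimodular.submatrix _ _
    obtain ⟨s, hs⟩ := hTU n id (S.orderEmbOfFin hS) Function.injective_id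
      (S.orderEmbOfFin hS).injective
    rw [← hs] at hne ⊢
    cases s <;> simp at hne ⊢
  · rw [det_submatrix_reducedIncMat_eq_zero_of_not_connectedOn hsimple hS hS_conn, sq, zero_mul]

theorem weighted_matrix_tree_theorem_general
    (src tgt : Fin m → Fin (n + 1)) (B : Fin m → ℝ)
    (hsimple : ∀ e, src e ≠ tgt e) :
    (rlap src tgt B).det = treeSum src tgt B := by
  classical
  rw [rlap_eq_reducedIncMat, det_mul_diagonal_mul_transpose, treeSum, sum_filter]
  refine sum_congr rfl fun S _ => ?_
  by_cases hS : S.card = n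
  · simp [hS, IsSpanningTree, det_submatrix_reducedIncMat_sq hsimple hS]
  · simp [hS, IsSpanningTree]

/-- **Weighted Matrix Tree Theorem.**
For a connected simple graph with positive edge weights, the determinant of the reduced
weighted Laplacian equals the total weight of all spanning trees. -/
theorem weighted_matrix_tree_theorem
    (src tgt : Fin m → Fin (n + 1)) (B : Fin m → ℝ)
    (hB : ∀ e, 0 < B e)
    (hsimple : ∀ e, src e ≠ tgt e)
    (hconn : ConnectedOn src tgt Finset.univ) :
    (rlap src tgt B).det = treeSum src tgt B :=
  weighted_matrix_tree_theorem_general src tgt B hsimple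
end

section
/- Single-line-outage flow redistribution: Let ℓ̂ ∈ E be a non-bridge edge of the connected graph G, and let p ∈ ℝ^n be a balanced injection vector (Σ_i p_i = 0). Let f = diag(B)·C^T·A·p be the pre-contingency branch flow vector, and let f̃ = B_{−ℓ̂}·C_{−ℓ̂}^T·A_{−ℓ̂}·p be the post-contingency branch flow vector on the graph G with ℓ̂ removed (with the same injections p). Then for every surviving edge l ≠ ℓ̂, f̃_l − f_l = (D_{lℓ̂} / (1 − D_{ℓ̂ℓ̂})) · f_ℓ̂. -/
open Matrix Finset

variable {n m : ℕ}

section SingleLineOutageAux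

variable {n m : ℕ}

/-- Edgewise-summed Laplacian over an edge set `S`. -/
noncomputable def lapS (src tgt : Fin m → Fin (n + 1)) (B : Fin m → ℝ) (S : Finset (Fin m)) :
    Matrix (Fin (n + 1)) (Fin (n + 1)) ℝ :=
  Matrix.of fun i j => ∑ e ∈ S, B e * incMat src tgt i e * incMat src tgt j e

lemma inc_dot (src tgt : Fin m → Fin (n + 1)) {e : Fin m} (h : src e ≠ tgt e)
    (y : Fin (n + 1) → ℝ) :
    ∑ i, incMat src tgt i e * y i = y (src e) - y (tgt e) := by
  have key : ∀ i, incMat src tgt i e * y i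
      = (if src e = i then y i else 0) + (if tgt e = i then -y i else 0) := by
    intro i
    by_cases h1 : src e = i
    · have h2 : tgt e ≠ i := fun hh => h (h1.trans hh.symm)
      simp [incMat, h1, h2]
    · by_cases h2 : tgt e = i <;> simp [incMat, h1, h2]
  simp_rw [key]
  rw [Finset.sum_add_distrib, Finset.sum_ite_eq, Finset.sum_ite_eq]
  simp [sub_eq_add_neg]

lemma inc_dot_reduced (src tgt : Fin m → Fin (n + 1)) {e : Fin m} (h : src e ≠ tgt e)
    (z : Fin n → ℝ) :
    ∑ i : Fin n, incMat src tgt i.castSucc e * z i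
      = (Fin.snoc z (0:ℝ) : Fin (n+1) → ℝ) (src e)
        - (Fin.snoc z (0:ℝ) : Fin (n+1) → ℝ) (tgt e) := by
  rw [← inc_dot src tgt h (Fin.snoc z (0:ℝ) : Fin (n+1) → ℝ), Fin.sum_univ_castSucc]
  simp

lemma lapS_qform (src tgt : Fin m → Fin (n + 1)) (B : Fin m → ℝ) (S : Finset (Fin m))
    (hs : ∀ e, src e ≠ tgt e) (x : Fin n → ℝ) :
    x ⬝ᵥ ((lapS src tgt B S).submatrix Fin.castSucc Fin.castSucc *ᵥ x)
      = ∑ e ∈ S, B e *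
          ((Fin.snoc x (0:ℝ) : Fin (n+1) → ℝ) (src e)
            - (Fin.snoc x (0:ℝ) : Fin (n+1) → ℝ) (tgt e)) ^ 2 := by
  have hr : ∀ e, (Fin.snoc x (0:ℝ) : Fin (n+1) → ℝ) (src e)
      - (Fin.snoc x (0:ℝ) : Fin (n+1) → ℝ) (tgt e)
      = ∑ i : Fin n, incMat src tgt i.castSucc e * x i :=
    fun e => (inc_dot_reduced src tgt (hs e) x).symm
  calc x ⬝ᵥ ((lapS src tgt B S).submatrix Fin.castSucc Fin.castSucc *ᵥ x)
      = ∑ i : Fin n, ∑ j : Fin n, ∑ e ∈ S,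
          x i * (B e * incMat src tgt i.castSucc e * incMat src tgt j.castSucc e * x j) := by
        simp only [dotProduct, Matrix.mulVec, Matrix.submatrix_apply, lapS, Matrix.of_apply,
          dotProduct, Finset.mul_sum, Finset.sum_mul]
    _ = ∑ e ∈ S, ∑ i : Fin n, ∑ j : Fin n,
          x i * (B e * incMat src tgt i.castSucc e * incMat src tgt j.castSucc e * x j) := by
        rw [show (∑ i : Fin n, ∑ j : Fin n, ∑ e ∈ S,
            x i * (B e * incMat src tgt i.castSucc e * incMat src tgt j.castSucc e * x j))
            = ∑ i : Fin n, ∑ e ∈ S, ∑ j : Fin n,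
            x i * (B e * incMat src tgt i.castSucc e * incMat src tgt j.castSucc e * x j)
          from Finset.sum_congr rfl fun i _ => Finset.sum_comm]
        exact Finset.sum_comm
    _ = ∑ e ∈ S, B e * (∑ i : Fin n, incMat src tgt i.castSucc e * x i)
          * (∑ j : Fin n, incMat src tgt j.castSucc e * x j) := by
        refine Finset.sum_congr rfl fun e _ => ?_
        simp only [Finset.sum_mul, Finset.mul_sum]
        exact Finset.sum_congr rfl fun i _ => Finset.sum_congr rfl fun j _ => by ring
    _ = _ := by
        refine Finset.sum_congr rfl fun e _ => ?_
        rw [hr e]; ring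

lemma lapS_isUnit_det (src tgt : Fin m → Fin (n + 1)) (B : Fin m → ℝ) (S : Finset (Fin m))
    (hB : ∀ e, 0 < B e) (hs : ∀ e, src e ≠ tgt e) (hconn : ConnectedOn src tgt S) :
    IsUnit ((lapS src tgt B S).submatrix Fin.castSucc Fin.castSucc).det := by
  rw [isUnit_iff_ne_zero]
  intro hdet
  obtain ⟨v, hv0, hv⟩ := (Matrix.exists_mulVec_eq_zero_iff).2 hdet
  have hq := lapS_qform src tgt B S hs v
  rw [hv, dotProduct_zero] at hq
  have hterm : ∀ e ∈ S, (Fin.snoc v (0:ℝ) : Fin (n+1) → ℝ) (src e)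
      = (Fin.snoc v (0:ℝ) : Fin (n+1) → ℝ) (tgt e) := by
    intro e he
    have h1 : ∀ e ∈ S, (0:ℝ) ≤ B e *
        ((Fin.snoc v (0:ℝ) : Fin (n+1) → ℝ) (src e)
          - (Fin.snoc v (0:ℝ) : Fin (n+1) → ℝ) (tgt e)) ^ 2 :=
      fun e _ => mul_nonneg (hB e).le (sq_nonneg _)
    have h2 := (Finset.sum_eq_zero_iff_of_nonneg h1).1 hq.symm e he
    rcases mul_eq_zero.1 h2 with h | h
    · exact absurd h (hB e).ne'
    · have := (pow_eq_zero_iff two_ne_zero).1 h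
      linarith [sub_eq_zero.1 this]
  have hrel : ∀ {a b : Fin (n+1)}, Relation.ReflTransGen (edgeAdj src tgt S) a b →
      (Fin.snoc v (0:ℝ) : Fin (n+1) → ℝ) a = (Fin.snoc v (0:ℝ) : Fin (n+1) → ℝ) b := by
    intro a b h
    induction h with
    | refl => rfl
    | tail _ hbc ih =>
      obtain ⟨e, he, hor⟩ := hbc
      rcases hor with ⟨h1, h2⟩ | ⟨h1, h2⟩
      · rw [ih, ← h1, ← h2]; exact hterm e he
      · rw [ih, ← h2, ← h1]; exact (hterm e he).symm
  have hconst : ∀ a, (Fin.snoc v (0:ℝ) : Fin (n+1) → ℝ) a = 0 := by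
    intro a
    have hstep := hrel (hconn a (Fin.last n))
    simpa using hstep
  apply hv0
  funext i
  have := hconst i.castSucc
  simpa using this

lemma lap_eq_lapS (src tgt : Fin m → Fin (n + 1)) (B : Fin m → ℝ) :
    lap src tgt B = lapS src tgt B Finset.univ := by
  ext i j
  rw [lap, Matrix.mul_assoc]
  simp only [lapS, Matrix.of_apply, Matrix.mul_apply, Matrix.diagonal_mul,
    Matrix.transpose_apply]
  refine Finset.sum_congr rfl fun e _ => ?_
  rw [Finset.sum_eq_single e
    (fun x _ hx => by rw [Matrix.diagonal_apply_ne _ (Ne.symm hx), zero_mul])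
    (by simp), Matrix.diagonal_apply_eq]
  ring

lemma lapMinus_eq_lapS (src tgt : Fin m → Fin (n + 1)) (B : Fin m → ℝ) (lhat : Fin m) :
    lapMinus src tgt B ({lhat} : Finset (Fin m)) = lapS src tgt B (Finset.univ.erase lhat) := by
  ext i j
  rw [lapMinus, Matrix.mul_assoc, Matrix.mul_apply]
  simp only [Bminus, Matrix.diagonal_mul, Cminus, Matrix.transpose_apply,
    Matrix.submatrix_apply, id_eq]
  rw [lapS, Matrix.of_apply, Finset.sum_subtype (Finset.univ.erase lhat)
    (p := fun e => e ∉ ({lhat} : Finset (Fin m))) (by intro x; simp)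
    (fun e => B e * incMat src tgt i e * incMat src tgt j e)]
  exact Finset.sum_congr rfl fun e _ => by ring

lemma vecMulVec_mulVec' (a b v : Fin n → ℝ) :
    Matrix.vecMulVec a b *ᵥ v = (b ⬝ᵥ v) • a := by
  funext i
  simp only [Matrix.mulVec, dotProduct, Matrix.vecMulVec_apply, Pi.smul_apply, smul_eq_mul,
    Finset.sum_mul]
  exact Finset.sum_congr rfl fun j _ => by ring

lemma vecMulVec_mul' (a b : Fin n → ℝ) (Y : Matrix (Fin n) (Fin n) ℝ) :
    Matrix.vecMulVec a b * Y = Matrix.vecMulVec a (b ᵥ* Y) := by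
  ext i j
  simp only [Matrix.mul_apply, Matrix.vecMulVec_apply, Matrix.vecMul, dotProduct,
    Finset.mul_sum]
  exact Finset.sum_congr rfl fun k _ => by ring

lemma vecMulVec_mul_vecMulVec' (a b c d : Fin n → ℝ) :
    Matrix.vecMulVec a b * Matrix.vecMulVec c d = (b ⬝ᵥ c) • Matrix.vecMulVec a d := by
  ext i j
  simp only [Matrix.mul_apply, Matrix.vecMulVec_apply, Matrix.smul_apply, smul_eq_mul,
    dotProduct, Finset.sum_mul]
  exact Finset.sum_congr rfl fun k _ => by ring

lemma pad_mulVec (X : Matrix (Fin n) (Fin n) ℝ) (p : Fin (n + 1) → ℝ) :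
    ((Matrix.of fun i j => if hi : i = Fin.last n then (0:ℝ) else if hj : j = Fin.last n then 0
        else X (i.castPred hi) (j.castPred hj)) *ᵥ p)
      = (Fin.snoc (X *ᵥ fun i => p i.castSucc) (0:ℝ) : Fin (n+1) → ℝ) := by
  funext i
  by_cases hi : i = Fin.last n
  · subst hi
    simp [Matrix.mulVec, dotProduct, Fin.snoc_last]
  · obtain ⟨i0, rfl⟩ := Fin.exists_castSucc_eq.mpr hi
    rw [Matrix.mulVec, dotProduct, Fin.sum_univ_castSucc]
    simp [Fin.snoc_castSucc, Fin.castPred_castSucc, (Fin.castSucc_lt_last _).ne,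
      Matrix.mulVec, dotProduct]

lemma sum_mul_indicator (q : Fin (n + 1)) (f : Fin n → ℝ) :
    ∑ j : Fin n, f j * (if q = j.castSucc then (1:ℝ) else 0)
      = if h : q = Fin.last n then 0 else f (q.castPred h) := by
  by_cases h : q = Fin.last n
  · rw [dif_pos h]
    subst h
    refine Finset.sum_eq_zero fun j _ => ?_
    rw [if_neg (Ne.symm (Fin.castSucc_lt_last j).ne), mul_zero]
  · rw [dif_neg h]
    obtain ⟨q0, rfl⟩ := Fin.exists_castSucc_eq.mpr h
    rw [Finset.sum_eq_single q0
      (fun j _ hj => by rw [if_neg fun hh => hj (Fin.castSucc_injective _ hh).symm, mul_zero])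
      (by simp)]
    simp [Fin.castPred_castSucc]

end SingleLineOutageAux

/-- **Single-line-outage flow redistribution.**
For a non-bridge edge `ℓ̂` and a balanced injection vector `p`, the change of branch flow
on any surviving line `l` after tripping `ℓ̂` equals `K_{lℓ̂} = D_{lℓ̂}/(1 − D_{ℓ̂ℓ̂})`
times the pre-contingency flow on `ℓ̂`. -/
theorem single_line_outage_redistribution
    (src tgt : Fin m → Fin (n + 1)) (B : Fin m → ℝ)
    (hB : ∀ e, 0 < B e)
    (hsimple : ∀ e, src e ≠ tgt e)
    (hconn : ConnectedOn src tgt Finset.univ)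
    (lhat : Fin m)
    (hnb : ConnectedOn src tgt (Finset.univ.erase lhat))
    (p : Fin (n + 1) → ℝ) (hp : ∑ i, p i = 0) :
    ∀ l : {e : Fin m // e ∉ ({lhat} : Finset (Fin m))},
      flowPost src tgt B {lhat} p l - flowPre src tgt B p l.val
        = ptdf src tgt B l.val (src lhat) (tgt lhat)
            / (1 - ptdf src tgt B lhat (src lhat) (tgt lhat))
          * flowPre src tgt B p lhat := by
    classical
  intro l
  -- notation
  set cb : Fin n → ℝ := fun i => incMat src tgt i.castSucc lhat with hcb
  set pbar : Fin n → ℝ := fun i => p i.castSucc with hpbar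
  set L : Matrix (Fin n) (Fin n) ℝ := rlap src tgt B with hL
  set Ab : Matrix (Fin n) (Fin n) ℝ := (rlap src tgt B)⁻¹ with hAb
  set M : Matrix (Fin n) (Fin n) ℝ :=
    (lapMinus src tgt B ({lhat} : Finset (Fin m))).submatrix Fin.castSucc Fin.castSucc with hM
  have hLeq : L = (lapS src tgt B Finset.univ).submatrix Fin.castSucc Fin.castSucc := by
    rw [hL, rlap, lap_eq_lapS]
  have hMeq : M = (lapS src tgt B (Finset.univ.erase lhat)).submatrix
      Fin.castSucc Fin.castSucc := by
    rw [hM, lapMinus_eq_lapS]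
  have hdetL : IsUnit L.det := by
    rw [hLeq]; exact lapS_isUnit_det _ _ _ _ hB hsimple hconn
  have hdetM : IsUnit M.det := by
    rw [hMeq]; exact lapS_isUnit_det _ _ _ _ hB hsimple hnb
  have hLA : L * Ab = 1 := by rw [hAb, ← hL]; exact Matrix.mul_nonsing_inv _ hdetL
  have hsplit : L = M + B lhat • Matrix.vecMulVec cb cb := by
    rw [hLeq, hMeq]
    ext i j
    simp only [Matrix.add_apply, Matrix.smul_apply, Matrix.vecMulVec_apply,
      Matrix.submatrix_apply, lapS, Matrix.of_apply, smul_eq_mul, hcb]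
    rw [← Finset.sum_erase_add Finset.univ _ (Finset.mem_univ lhat)]
    ring
  have hsplit' : M = L - B lhat • Matrix.vecMulVec cb cb := by
    rw [hsplit, add_sub_cancel_right]
  set s : ℝ := cb ⬝ᵥ (Ab *ᵥ cb) with hs
  set d : ℝ := 1 - B lhat * s with hd
  have hcbne : cb ≠ 0 := by
    intro h0
    by_cases hsl : src lhat = Fin.last n
    · have htl : tgt lhat ≠ Fin.last n := fun h => hsimple lhat (hsl.trans h.symm)
      have h1 := congrFun h0 ((tgt lhat).castPred htl)
      simp [hcb, incMat, Fin.castSucc_castPred, hsimple lhat] at h1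
    · have h1 := congrFun h0 ((src lhat).castPred hsl)
      simp [hcb, incMat, Fin.castSucc_castPred] at h1
  have hdne : d ≠ 0 := by
    intro h0
    have hker : M *ᵥ (Ab *ᵥ cb) = 0 := by
      rw [hsplit', Matrix.sub_mulVec, Matrix.smul_mulVec,
        Matrix.mulVec_mulVec, hLA, Matrix.one_mulVec, vecMulVec_mulVec', ← hs, smul_smul]
      rw [show cb - (B lhat * s) • cb = d • cb by rw [hd, sub_smul, one_smul]]
      rw [h0, zero_smul]
    have hu : Ab *ᵥ cb ≠ 0 := by
      intro h0'
      apply hcbne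
      calc cb = (L * Ab) *ᵥ cb := by rw [hLA, Matrix.one_mulVec]
        _ = L *ᵥ (Ab *ᵥ cb) := (Matrix.mulVec_mulVec _ _ _).symm
        _ = 0 := by rw [h0', Matrix.mulVec_zero]
    exact (isUnit_iff_ne_zero.1 hdetM)
      (Matrix.exists_mulVec_eq_zero_iff.1 ⟨Ab *ᵥ cb, hu, hker⟩)
  have hdne' : (1:ℝ) - B lhat * s ≠ 0 := hd ▸ hdne
  set Np : Matrix (Fin n) (Fin n) ℝ :=
    Ab + (B lhat / d) • (Ab * Matrix.vecMulVec cb cb * Ab) with hNp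
  have e1 : L * (Ab * Matrix.vecMulVec cb cb * Ab) = Matrix.vecMulVec cb cb * Ab := by
    rw [← Matrix.mul_assoc, ← Matrix.mul_assoc, hLA, Matrix.one_mul]
  have hvav : Matrix.vecMulVec cb cb * Ab * Matrix.vecMulVec cb cb
      = s • Matrix.vecMulVec cb cb := by
    rw [vecMulVec_mul', vecMulVec_mul_vecMulVec', ← Matrix.dotProduct_mulVec, ← hs]
  have e2 : Matrix.vecMulVec cb cb * (Ab * Matrix.vecMulVec cb cb * Ab)
      = s • (Matrix.vecMulVec cb cb * Ab) := by
    rw [← Matrix.mul_assoc, ← Matrix.mul_assoc, hvav, Matrix.smul_mul]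
  have hMNp : M * Np = 1 := by
    rw [hsplit', hNp, Matrix.sub_mul, Matrix.mul_add, Matrix.mul_add,
      Matrix.mul_smul, Matrix.mul_smul, Matrix.smul_mul, Matrix.smul_mul,
      hLA, e1, e2, smul_smul, smul_smul]
    have key : ∀ (W : Matrix (Fin n) (Fin n) ℝ) (α β γ : ℝ), α = β + γ →
        (1 : Matrix (Fin n) (Fin n) ℝ) + α • W - (β • W + γ • W) = 1 := by
      intro W α β γ h
      rw [h, add_smul]; abel
    apply key
    rw [hd]
    field_simp
    ring
  have hNpinv : M⁻¹ = Np := Matrix.inv_eq_right_inv hMNp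
  -- padded mulVec identities
  have hq : Amat src tgt B *ᵥ p = (Fin.snoc (Ab *ᵥ pbar) (0:ℝ) : Fin (n+1) → ℝ) :=
    pad_mulVec _ p
  have hqm : AmatMinus src tgt B ({lhat} : Finset (Fin m)) *ᵥ p
      = (Fin.snoc (Np *ᵥ pbar) (0:ℝ) : Fin (n+1) → ℝ) := by
    rw [← hNpinv]
    exact pad_mulVec _ p
  -- flow formulas
  have hpre : ∀ e : Fin m, flowPre src tgt B p e
      = B e * ∑ i : Fin n, incMat src tgt i.castSucc e * (Ab *ᵥ pbar) i := by
    intro e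
    rw [flowPre, ← Matrix.mulVec_mulVec, ← Matrix.mulVec_mulVec, hq]
    rw [show ((Matrix.diagonal B *ᵥ ((incMat src tgt)ᵀ *ᵥ
          (Fin.snoc (Ab *ᵥ pbar) (0:ℝ) : Fin (n+1) → ℝ))) e)
        = B e * (((incMat src tgt)ᵀ *ᵥ
          (Fin.snoc (Ab *ᵥ pbar) (0:ℝ) : Fin (n+1) → ℝ)) e)
      from Matrix.mulVec_diagonal _ _ _]
    congr 1
    rw [Matrix.mulVec, dotProduct, Fin.sum_univ_castSucc]
    simp [Matrix.transpose_apply, Fin.snoc_castSucc, Fin.snoc_last]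
  have hpost : flowPost src tgt B ({lhat} : Finset (Fin m)) p l
      = B l.val * ∑ i : Fin n, incMat src tgt i.castSucc l.val * (Np *ᵥ pbar) i := by
    rw [flowPost, ← Matrix.mulVec_mulVec, ← Matrix.mulVec_mulVec, hqm]
    rw [show ((Bminus B ({lhat} : Finset (Fin m)) *ᵥ ((Cminus src tgt {lhat})ᵀ *ᵥ
          (Fin.snoc (Np *ᵥ pbar) (0:ℝ) : Fin (n+1) → ℝ))) l)
        = B l.val * (((Cminus src tgt {lhat})ᵀ *ᵥ
          (Fin.snoc (Np *ᵥ pbar) (0:ℝ) : Fin (n+1) → ℝ)) l)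
      from Matrix.mulVec_diagonal _ _ _]
    congr 1
    rw [Matrix.mulVec, dotProduct, Fin.sum_univ_castSucc]
    simp [Cminus, Matrix.transpose_apply, Matrix.submatrix_apply, Fin.snoc_castSucc,
      Fin.snoc_last]
  -- ptdf formula
  have hAmat : ∀ (a0 : Fin n) (q : Fin (n+1)), Amat src tgt B a0.castSucc q
      = if h : q = Fin.last n then 0 else Ab a0 (q.castPred h) := by
    intro a0 q
    by_cases hq : q = Fin.last n
    · simp [Amat, hq, (Fin.castSucc_lt_last a0).ne]
    · simp [Amat, hq, (Fin.castSucc_lt_last a0).ne, Fin.castPred_castSucc, hAb]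
  have hdiff : ∀ a : Fin (n+1), Amat src tgt B a (src lhat) - Amat src tgt B a (tgt lhat)
      = (Fin.snoc (Ab *ᵥ cb) (0:ℝ) : Fin (n+1) → ℝ) a := by
    intro a
    by_cases ha : a = Fin.last n
    · subst ha
      simp [Amat, Fin.snoc_last]
    · obtain ⟨a0, rfl⟩ := Fin.exists_castSucc_eq.mpr ha
      rw [hAmat a0 (src lhat), hAmat a0 (tgt lhat), Fin.snoc_castSucc]
      have hcbval : ∀ j : Fin n, cb j
          = (if src lhat = j.castSucc then (1:ℝ) else 0)
            - (if tgt lhat = j.castSucc then (1:ℝ) else 0) := by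
        intro j
        by_cases h1 : src lhat = j.castSucc
        · have h2 : tgt lhat ≠ j.castSucc := fun hh => hsimple lhat (h1.trans hh.symm)
          simp [hcb, incMat, h1, h2]
        · by_cases h2 : tgt lhat = j.castSucc <;> simp [hcb, incMat, h1, h2]
      have : (Ab *ᵥ cb) a0 = ∑ j : Fin n, Ab a0 j * cb j := rfl
      rw [this]
      simp_rw [hcbval, mul_sub]
      rw [Finset.sum_sub_distrib, sum_mul_indicator, sum_mul_indicator]
  have hptdf : ∀ e : Fin m, ptdf src tgt B e (src lhat) (tgt lhat)
      = B e * ∑ i : Fin n, incMat src tgt i.castSucc e * (Ab *ᵥ cb) i := by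
    intro e
    rw [ptdf, inc_dot_reduced src tgt (hsimple e) (Ab *ᵥ cb), ← hdiff (src e), ← hdiff (tgt e)]
    ring
  -- post-contingency inverse acting on pbar
  have hNpv : Np *ᵥ pbar = Ab *ᵥ pbar
      + ((B lhat / d) * (cb ⬝ᵥ (Ab *ᵥ pbar))) • (Ab *ᵥ cb) := by
    rw [hNp, Matrix.add_mulVec, Matrix.smul_mulVec]
    congr 1
    rw [← Matrix.mulVec_mulVec, ← Matrix.mulVec_mulVec, vecMulVec_mulVec',
      Matrix.mulVec_smul, smul_smul]
  -- final assembly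
  rw [hpost, hpre l.val, hpre lhat, hptdf l.val, hptdf lhat, hNpv]
  have hexp : ∑ i : Fin n, incMat src tgt i.castSucc l.val *
        (Ab *ᵥ pbar + ((B lhat / d) * (cb ⬝ᵥ (Ab *ᵥ pbar))) • (Ab *ᵥ cb)) i
      = (∑ i : Fin n, incMat src tgt i.castSucc l.val * (Ab *ᵥ pbar) i)
        + ((B lhat / d) * (cb ⬝ᵥ (Ab *ᵥ pbar)))
          * ∑ i : Fin n, incMat src tgt i.castSucc l.val * (Ab *ᵥ cb) i := by
    rw [Finset.mul_sum, ← Finset.sum_add_distrib]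
    refine Finset.sum_congr rfl fun i _ => ?_
    simp [Pi.add_apply, Pi.smul_apply, smul_eq_mul]
    ring
  rw [hexp]
  have hsum_s : ∑ i : Fin n, incMat src tgt i.castSucc lhat * (Ab *ᵥ cb) i = s := by
    rw [hs]; rfl
  have hsum_t : ∑ i : Fin n, incMat src tgt i.castSucc lhat * (Ab *ᵥ pbar) i
      = cb ⬝ᵥ (Ab *ᵥ pbar) := rfl
  rw [hsum_s, hsum_t]
  rw [show (1:ℝ) - B lhat * s = d from hd.symm]
  field_simp
  ring
end

section
/- GLODF via post-contingency network (Theorem 4, part 1): Let F ⊊ E be a non-cut set of edges of the connected graph G, i.e., G with all edges of F removed remains connected. Let p ∈ ℝ^n be a balanced injection vector, let f = diag(B)·C^T·A·p be the pre-contingency branch flow vector with components f_{−F} (on surviving edges) and f_F (on removed edges), and let f̃_{−F} = B_{−F}·C_{−F}^T·A_{−F}·p be the post-contingency branch flows on the graph G with F removed. Then f̃_{−F} − f_{−F} = B_{−F}·C_{−F}^T·A_{−F}·C_F·f_F. -/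
open Matrix Finset

variable {n m : ℕ}

section AuxGLODF

variable {n m : ℕ}

lemma aux_incMat_dot (src tgt : Fin m → Fin (n + 1)) (hs : ∀ e, src e ≠ tgt e)
    (x : Fin (n + 1) → ℝ) (e : Fin m) :
    ∑ i, incMat src tgt i e * x i = x (src e) - x (tgt e) := by
  classical
  have h : ∀ i, incMat src tgt i e * x i
      = (if src e = i then x i else 0) + (if tgt e = i then -x i else 0) := by
    intro i
    by_cases h1 : src e = i <;> by_cases h2 : tgt e = i <;>
      simp [incMat, h1, h2]
    exact absurd (h1.trans h2.symm) (hs e)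
  rw [Finset.sum_congr rfl fun i _ => h i, Finset.sum_add_distrib,
    Finset.sum_ite_eq, Finset.sum_ite_eq]
  simp [sub_eq_add_neg]

lemma aux_incMat_col_sum (src tgt : Fin m → Fin (n + 1)) (hs : ∀ e, src e ≠ tgt e)
    (e : Fin m) : ∑ i, incMat src tgt i e = 0 := by
  have := aux_incMat_dot src tgt hs (fun _ => (1 : ℝ)) e
  simpa using this

lemma aux_lap_apply (src tgt : Fin m → Fin (n + 1)) (w : Fin m → ℝ) (i j : Fin (n + 1)) :
    lap src tgt w i j = ∑ e, incMat src tgt i e * w e * incMat src tgt j e := by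
  have h : lap src tgt w i j
      = ∑ e, (incMat src tgt * Matrix.diagonal w) i e * incMat src tgt j e := by
    simp [lap, Matrix.mul_apply, Matrix.transpose_apply]
  rw [h]
  refine Finset.sum_congr rfl fun e _ => ?_
  rw [Matrix.mul_diagonal]

lemma aux_lap_mulVec_apply (src tgt : Fin m → Fin (n + 1)) (hs : ∀ e, src e ≠ tgt e)
    (w : Fin m → ℝ) (z : Fin (n + 1) → ℝ) (i : Fin (n + 1)) :
    (lap src tgt w *ᵥ z) i
      = ∑ e, incMat src tgt i e * (w e * (z (src e) - z (tgt e))) := by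
  have h0 : (lap src tgt w *ᵥ z) i
      = ∑ j, ∑ e, incMat src tgt i e * w e * incMat src tgt j e * z j := by
    simp [Matrix.mulVec, dotProduct, aux_lap_apply, Finset.sum_mul]
  rw [h0, Finset.sum_comm]
  refine Finset.sum_congr rfl fun e _ => ?_
  have h1 : ∀ j, incMat src tgt i e * w e * incMat src tgt j e * z j
      = (incMat src tgt i e * w e) * (incMat src tgt j e * z j) := fun j => by ring
  rw [Finset.sum_congr rfl fun j _ => h1 j, ← Finset.mul_sum,
    aux_incMat_dot src tgt hs z e]
  ring

lemma aux_sum_lap_mulVec (src tgt : Fin m → Fin (n + 1)) (hs : ∀ e, src e ≠ tgt e)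
    (w : Fin m → ℝ) (z : Fin (n + 1) → ℝ) :
    ∑ i, (lap src tgt w *ᵥ z) i = 0 := by
  simp_rw [aux_lap_mulVec_apply src tgt hs w z]
  rw [Finset.sum_comm]
  refine Finset.sum_eq_zero fun e _ => ?_
  rw [← Finset.sum_mul, aux_incMat_col_sum src tgt hs, zero_mul]

lemma aux_lap_row_sum (src tgt : Fin m → Fin (n + 1)) (hs : ∀ e, src e ≠ tgt e)
    (w : Fin m → ℝ) (i : Fin (n + 1)) : ∑ j, lap src tgt w i j = 0 := by
  simp_rw [aux_lap_apply]
  rw [Finset.sum_comm]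
  refine Finset.sum_eq_zero fun e _ => ?_
  have h : ∑ j, incMat src tgt j e = 0 := aux_incMat_col_sum src tgt hs e
  calc ∑ j, incMat src tgt i e * w e * incMat src tgt j e
      = incMat src tgt i e * w e * ∑ j, incMat src tgt j e := by
        rw [Finset.mul_sum]
    _ = 0 := by rw [h, mul_zero]

/-- `(lap w *ᵥ z)` at a `castSucc` index, via the reduced Laplacian. -/
lemma aux_rlap_mulVec (src tgt : Fin m → Fin (n + 1)) (hs : ∀ e, src e ≠ tgt e)
    (w : Fin m → ℝ) (z : Fin (n + 1) → ℝ) (k : Fin n) :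
    (lap src tgt w *ᵥ z) (Fin.castSucc k)
      = (rlap src tgt w *ᵥ fun j => z (Fin.castSucc j) - z (Fin.last n)) k := by
  have hrow : lap src tgt w (Fin.castSucc k) (Fin.last n)
      = -∑ j : Fin n, lap src tgt w (Fin.castSucc k) (Fin.castSucc j) := by
    have h := aux_lap_row_sum src tgt hs w (Fin.castSucc k)
    rw [Fin.sum_univ_castSucc] at h
    linarith
  show ∑ j, lap src tgt w (Fin.castSucc k) j * z j = _
  rw [Fin.sum_univ_castSucc, hrow]
  have hR : (rlap src tgt w *ᵥ fun j => z (Fin.castSucc j) - z (Fin.last n)) k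
      = ∑ j : Fin n, lap src tgt w (Fin.castSucc k) (Fin.castSucc j)
          * (z (Fin.castSucc j) - z (Fin.last n)) := by
    simp [Matrix.mulVec, dotProduct, rlap]
  rw [hR]
  simp_rw [mul_sub, Finset.sum_sub_distrib, ← Finset.sum_mul]
  ring

/-- Padded inverse: generic padding. -/
noncomputable def auxPad (M : Matrix (Fin n) (Fin n) ℝ) :
    Matrix (Fin (n + 1)) (Fin (n + 1)) ℝ :=
  Matrix.of fun i j =>
    if hi : i = Fin.last n then 0
    else if hj : j = Fin.last n then 0
    else M (i.castPred hi) (j.castPred hj)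

lemma aux_Amat_eq (src tgt : Fin m → Fin (n + 1)) (B : Fin m → ℝ) :
    Amat src tgt B = auxPad (rlap src tgt B)⁻¹ := rfl

lemma aux_pad_mulVec_last (M : Matrix (Fin n) (Fin n) ℝ) (y : Fin (n + 1) → ℝ) :
    (auxPad M *ᵥ y) (Fin.last n) = 0 := by
  simp [auxPad, Matrix.mulVec, dotProduct]

lemma aux_pad_mulVec_castSucc (M : Matrix (Fin n) (Fin n) ℝ) (y : Fin (n + 1) → ℝ)
    (i : Fin n) :
    (auxPad M *ᵥ y) (Fin.castSucc i) = (M *ᵥ fun j => y (Fin.castSucc j)) i := by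
  show ∑ j, auxPad M (Fin.castSucc i) j * y j = _
  rw [Fin.sum_univ_castSucc]
  have hne : ∀ j : Fin n, (Fin.castSucc j : Fin (n + 1)) ≠ Fin.last n :=
    fun j => (Fin.castSucc_lt_last j).ne
  simp [auxPad, Matrix.mulVec, dotProduct, hne]

lemma aux_pad_lap_mulVec (src tgt : Fin m → Fin (n + 1)) (hs : ∀ e, src e ≠ tgt e)
    (w : Fin m → ℝ) (hdet : IsUnit (rlap src tgt w).det) (z : Fin (n + 1) → ℝ) :
    auxPad (rlap src tgt w)⁻¹ *ᵥ (lap src tgt w *ᵥ z)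
      = fun i => z i - z (Fin.last n) := by
  funext i
  rcases eq_or_ne i (Fin.last n) with h | h
  · subst h
    rw [aux_pad_mulVec_last]
    ring
  · obtain ⟨i', rfl⟩ : ∃ i', i = Fin.castSucc i' :=
      ⟨i.castPred h, (Fin.castSucc_castPred i h).symm⟩
    rw [aux_pad_mulVec_castSucc]
    have h2 : (fun j => (lap src tgt w *ᵥ z) (Fin.castSucc j))
        = rlap src tgt w *ᵥ (fun j => z (Fin.castSucc j) - z (Fin.last n)) := by
      funext k; exact aux_rlap_mulVec src tgt hs w z k
    rw [h2, Matrix.mulVec_mulVec, Matrix.nonsing_inv_mul _ hdet, Matrix.one_mulVec]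

lemma aux_lap_pad_mulVec (src tgt : Fin m → Fin (n + 1)) (hs : ∀ e, src e ≠ tgt e)
    (w : Fin m → ℝ) (hdet : IsUnit (rlap src tgt w).det) (v : Fin (n + 1) → ℝ)
    (hv : ∑ i, v i = 0) :
    lap src tgt w *ᵥ (auxPad (rlap src tgt w)⁻¹ *ᵥ v) = v := by
  set q := auxPad (rlap src tgt w)⁻¹ *ᵥ v with hq
  have hcast : ∀ k : Fin n, (lap src tgt w *ᵥ q) (Fin.castSucc k) = v (Fin.castSucc k) := by
    intro k
    rw [aux_rlap_mulVec src tgt hs w q k]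
    have h3 : (fun j => q (Fin.castSucc j) - q (Fin.last n))
        = (rlap src tgt w)⁻¹ *ᵥ (fun j => v (Fin.castSucc j)) := by
      funext j
      rw [hq]
      rw [aux_pad_mulVec_last, aux_pad_mulVec_castSucc]
      ring
    rw [h3, Matrix.mulVec_mulVec, Matrix.mul_nonsing_inv _ hdet, Matrix.one_mulVec]
  funext i
  rcases eq_or_ne i (Fin.last n) with h | h
  · subst h
    have hz := aux_sum_lap_mulVec src tgt hs w q
    rw [Fin.sum_univ_castSucc] at hz
    have hv2 := hv
    rw [Fin.sum_univ_castSucc] at hv2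
    have h4 : ∑ k : Fin n, (lap src tgt w *ᵥ q) (Fin.castSucc k)
        = ∑ k : Fin n, v (Fin.castSucc k) :=
      Finset.sum_congr rfl fun k _ => hcast k
    linarith
  · obtain ⟨i', rfl⟩ : ∃ i', i = Fin.castSucc i' :=
      ⟨i.castPred h, (Fin.castSucc_castPred i h).symm⟩
    exact hcast i'

lemma aux_rlap_det_isUnit (src tgt : Fin m → Fin (n + 1)) (w : Fin m → ℝ)
    (hw : ∀ e, 0 ≤ w e) (hs : ∀ e, src e ≠ tgt e)
    (S : Finset (Fin m)) (hSw : ∀ e ∈ S, w e ≠ 0)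
    (hS : ConnectedOn src tgt S) :
    IsUnit (rlap src tgt w).det := by
  classical
  rw [isUnit_iff_ne_zero]
  intro hdet
  obtain ⟨v, hv0, hv⟩ := (Matrix.exists_mulVec_eq_zero_iff).2 hdet
  set x : Fin (n + 1) → ℝ :=
    fun i => if hi : i = Fin.last n then 0 else v (i.castPred hi) with hx
  have hxc : ∀ j : Fin n, x (Fin.castSucc j) = v j := by
    intro j
    have hne : (Fin.castSucc j : Fin (n + 1)) ≠ Fin.last n := (Fin.castSucc_lt_last j).ne
    simp [hx, hne]
  have hxl : x (Fin.last n) = 0 := by simp [hx]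
  -- lap *ᵥ x vanishes on castSucc indices
  have hLx : ∀ k : Fin n, (lap src tgt w *ᵥ x) (Fin.castSucc k) = 0 := by
    intro k
    rw [aux_rlap_mulVec src tgt hs w x k]
    have h5 : (fun j => x (Fin.castSucc j) - x (Fin.last n)) = v := by
      funext j; rw [hxc, hxl]; ring
    rw [h5, hv]
    rfl
  have hLxl : (lap src tgt w *ᵥ x) (Fin.last n) = 0 := by
    have hz := aux_sum_lap_mulVec src tgt hs w x
    rw [Fin.sum_univ_castSucc] at hz
    have h6 : ∑ k : Fin n, (lap src tgt w *ᵥ x) (Fin.castSucc k) = 0 :=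
      Finset.sum_eq_zero fun k _ => hLx k
    linarith
  have hLx0 : lap src tgt w *ᵥ x = 0 := by
    funext i
    rcases eq_or_ne i (Fin.last n) with h | h
    · subst h; exact hLxl
    · obtain ⟨i', rfl⟩ : ∃ i', i = Fin.castSucc i' :=
        ⟨i.castPred h, (Fin.castSucc_castPred i h).symm⟩
      exact hLx i'
  -- quadratic form is zero
  have hquad : ∑ e, w e * (x (src e) - x (tgt e)) ^ 2 = 0 := by
    have h7 : ∑ i, x i * (lap src tgt w *ᵥ x) i = 0 := by
      rw [hLx0]; simp
    rw [← h7]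
    simp_rw [aux_lap_mulVec_apply src tgt hs w x, Finset.mul_sum]
    rw [Finset.sum_comm]
    refine Finset.sum_congr rfl fun e _ => ?_
    have h8 : ∀ i, x i * (incMat src tgt i e * (w e * (x (src e) - x (tgt e))))
        = (incMat src tgt i e * x i) * (w e * (x (src e) - x (tgt e))) := fun i => by ring
    rw [Finset.sum_congr rfl fun i _ => h8 i, ← Finset.sum_mul,
      aux_incMat_dot src tgt hs x e]
    ring
  have hzero : ∀ e, w e ≠ 0 → x (src e) = x (tgt e) := by
    intro e hwe
    have hnn : ∀ e ∈ (Finset.univ : Finset (Fin m)),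
        0 ≤ w e * (x (src e) - x (tgt e)) ^ 2 :=
      fun e _ => mul_nonneg (hw e) (sq_nonneg _)
    have h9 := (Finset.sum_eq_zero_iff_of_nonneg hnn).1 hquad e (Finset.mem_univ e)
    have h10 : (x (src e) - x (tgt e)) ^ 2 = 0 := by
      rcases mul_eq_zero.1 h9 with h | h
      · exact absurd h hwe
      · exact h
    have := pow_eq_zero_iff (n := 2) (by norm_num) |>.1 h10
    linarith [this]
  have hkey : ∀ a b : Fin (n + 1),
      Relation.ReflTransGen (edgeAdj src tgt S) a b → x a = x b := by
    intro a b h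
    induction h with
    | refl => rfl
    | tail _ hstep ih =>
        obtain ⟨e, heS, he⟩ := hstep
        have hd : x (src e) = x (tgt e) := hzero e (hSw e heS)
        rcases he with ⟨h3, h4⟩ | ⟨h3, h4⟩
        · rw [ih, ← h4, ← hd, h3]
        · rw [ih, ← h4, ← hd, h3]
  apply hv0
  funext i
  have h11 := hkey (Fin.castSucc i) (Fin.last n) (hS _ _)
  rw [hxc, hxl] at h11
  simpa using h11

end AuxGLODF
section AuxGLODF2

variable {n m : ℕ}

lemma aux_lapMinus_eq (src tgt : Fin m → Fin (n + 1)) (B : Fin m → ℝ)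
    (F : Finset (Fin m)) :
    lapMinus src tgt B F = lap src tgt (fun e => if e ∈ F then 0 else B e) := by
  classical
  ext i j
  rw [aux_lap_apply]
  have hL : lapMinus src tgt B F i j
      = ∑ e : {e : Fin m // e ∉ F},
          incMat src tgt i e.val * B e.val * incMat src tgt j e.val := by
    have h : lapMinus src tgt B F i j
        = ∑ e : {e : Fin m // e ∉ F},
            (Cminus src tgt F * Bminus B F) i e * (Cminus src tgt F)ᵀ e j := by
      simp [lapMinus, Matrix.mul_apply]
    rw [h]
    refine Finset.sum_congr rfl fun e _ => ?_
    unfold Bminus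
    rw [Matrix.mul_diagonal]
    simp [Cminus]
  rw [hL]
  have hsub : ∑ e : {e : Fin m // e ∉ F},
        incMat src tgt i e.val * B e.val * incMat src tgt j e.val
      = ∑ e ∈ Fᶜ, incMat src tgt i e * B e * incMat src tgt j e :=
    (Finset.sum_subtype Fᶜ (fun x => Finset.mem_compl)
      (fun e => incMat src tgt i e * B e * incMat src tgt j e)).symm
  rw [hsub, ← Finset.sum_compl_add_sum F
    (fun e => incMat src tgt i e * (if e ∈ F then 0 else B e) * incMat src tgt j e)]
  have h1 : ∑ e ∈ F,
      incMat src tgt i e * (if e ∈ F then 0 else B e) * incMat src tgt j e = 0 :=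
    Finset.sum_eq_zero fun e he => by simp [he]
  have h2 : ∑ e ∈ Fᶜ,
        incMat src tgt i e * (if e ∈ F then 0 else B e) * incMat src tgt j e
      = ∑ e ∈ Fᶜ, incMat src tgt i e * B e * incMat src tgt j e :=
    Finset.sum_congr rfl fun e he => by simp [Finset.mem_compl.1 he]
  rw [h1, h2, add_zero]

lemma aux_AmatMinus_eq (src tgt : Fin m → Fin (n + 1)) (B : Fin m → ℝ)
    (F : Finset (Fin m)) :
    AmatMinus src tgt B F
      = auxPad (rlap src tgt (fun e => if e ∈ F then 0 else B e))⁻¹ := by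
  have h : (lapMinus src tgt B F).submatrix Fin.castSucc Fin.castSucc
      = rlap src tgt (fun e => if e ∈ F then 0 else B e) := by
    rw [aux_lapMinus_eq]; rfl
  show auxPad ((lapMinus src tgt B F).submatrix Fin.castSucc Fin.castSucc)⁻¹ = _
  rw [h]

lemma aux_Cof_mulVec (src tgt : Fin m → Fin (n + 1)) (F : Finset (Fin m))
    (g : {e : Fin m // e ∈ F} → ℝ) (i : Fin (n + 1)) :
    (Cof src tgt F *ᵥ g) i
      = ∑ e : {e : Fin m // e ∈ F}, incMat src tgt i e.val * g e := by
  simp [Cof, Matrix.mulVec, dotProduct]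

lemma aux_Cminus_transpose_mulVec (src tgt : Fin m → Fin (n + 1))
    (hs : ∀ e, src e ≠ tgt e) (F : Finset (Fin m))
    (x : Fin (n + 1) → ℝ) (l : {e : Fin m // e ∉ F}) :
    ((Cminus src tgt F)ᵀ *ᵥ x) l = x (src l.val) - x (tgt l.val) := by
  have h : ((Cminus src tgt F)ᵀ *ᵥ x) l = ∑ i, incMat src tgt i l.val * x i := by
    simp [Cminus, Matrix.mulVec, dotProduct, mul_comm]
  rw [h, aux_incMat_dot src tgt hs x l.val]

lemma aux_incMat_transpose_mulVec (src tgt : Fin m → Fin (n + 1))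
    (hs : ∀ e, src e ≠ tgt e) (x : Fin (n + 1) → ℝ) (e : Fin m) :
    ((incMat src tgt)ᵀ *ᵥ x) e = x (src e) - x (tgt e) := by
  have h : ((incMat src tgt)ᵀ *ᵥ x) e = ∑ i, incMat src tgt i e * x i := by
    simp [Matrix.mulVec, dotProduct, mul_comm]
  rw [h, aux_incMat_dot src tgt hs x e]

lemma aux_flowPre_apply (src tgt : Fin m → Fin (n + 1)) (B : Fin m → ℝ)
    (hs : ∀ e, src e ≠ tgt e) (p : Fin (n + 1) → ℝ) (e : Fin m) :
    flowPre src tgt B p e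
      = B e * ((Amat src tgt B *ᵥ p) (src e) - (Amat src tgt B *ᵥ p) (tgt e)) := by
  have h : flowPre src tgt B p
      = Matrix.diagonal B *ᵥ ((incMat src tgt)ᵀ *ᵥ (Amat src tgt B *ᵥ p)) := by
    unfold flowPre
    rw [Matrix.mulVec_mulVec, Matrix.mulVec_mulVec]
  rw [h, Matrix.mulVec_diagonal, aux_incMat_transpose_mulVec src tgt hs]

lemma aux_flowPost_apply (src tgt : Fin m → Fin (n + 1)) (B : Fin m → ℝ)
    (hs : ∀ e, src e ≠ tgt e) (F : Finset (Fin m)) (p : Fin (n + 1) → ℝ)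
    (l : {e : Fin m // e ∉ F}) :
    flowPost src tgt B F p l
      = B l.val * ((AmatMinus src tgt B F *ᵥ p) (src l.val)
          - (AmatMinus src tgt B F *ᵥ p) (tgt l.val)) := by
  have h : flowPost src tgt B F p
      = Bminus B F *ᵥ ((Cminus src tgt F)ᵀ *ᵥ (AmatMinus src tgt B F *ᵥ p)) := by
    unfold flowPost
    rw [Matrix.mulVec_mulVec, Matrix.mulVec_mulVec]
  rw [h]
  unfold Bminus
  rw [Matrix.mulVec_diagonal, aux_Cminus_transpose_mulVec src tgt hs]

lemma aux_glodf_mulVec_apply (src tgt : Fin m → Fin (n + 1)) (B : Fin m → ℝ)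
    (hs : ∀ e, src e ≠ tgt e) (F : Finset (Fin m))
    (g : {e : Fin m // e ∈ F} → ℝ) (l : {e : Fin m // e ∉ F}) :
    (glodf src tgt B F *ᵥ g) l
      = B l.val * ((AmatMinus src tgt B F *ᵥ (Cof src tgt F *ᵥ g)) (src l.val)
          - (AmatMinus src tgt B F *ᵥ (Cof src tgt F *ᵥ g)) (tgt l.val)) := by
  have h : glodf src tgt B F *ᵥ g
      = Bminus B F *ᵥ ((Cminus src tgt F)ᵀ
          *ᵥ (AmatMinus src tgt B F *ᵥ (Cof src tgt F *ᵥ g))) := by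
    unfold glodf
    rw [Matrix.mulVec_mulVec, Matrix.mulVec_mulVec, Matrix.mulVec_mulVec]
  rw [h]
  unfold Bminus
  rw [Matrix.mulVec_diagonal, aux_Cminus_transpose_mulVec src tgt hs]

end AuxGLODF2

/-- **GLODF via post-contingency network, Theorem 4 part 1.**
For a non-cut set `F` of removed edges and a balanced injection vector `p`, the
post-contingency flow changes on the surviving edges equal
`B_{−F} C_{−F}ᵀ A_{−F} C_F ⬝ f_F` where `f_F` is the vector of pre-contingency flows on
the removed edges. -/
theorem glodf_post_contingency
    (src tgt : Fin m → Fin (n + 1)) (B : Fin m → ℝ)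
    (hB : ∀ e, 0 < B e)
    (hsimple : ∀ e, src e ≠ tgt e)
    (hconn : ConnectedOn src tgt Finset.univ)
    (F : Finset (Fin m)) (hF : F ⊂ Finset.univ)
    (hnc : ConnectedOn src tgt (Finset.univ \ F))
    (p : Fin (n + 1) → ℝ) (hp : ∑ i, p i = 0) :
    (flowPost src tgt B F p - fun l : {e : Fin m // e ∉ F} => flowPre src tgt B p l.val)
      = glodf src tgt B F *ᵥ (fun e : {e : Fin m // e ∈ F} => flowPre src tgt B p e.val) := by
  classical
  set B' : Fin m → ℝ := fun e => if e ∈ F then 0 else B e with hB'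
  have hdet : IsUnit (rlap src tgt B).det :=
    aux_rlap_det_isUnit src tgt B (fun e => (hB e).le) hsimple Finset.univ
      (fun e _ => (hB e).ne') hconn
  have hdet' : IsUnit (rlap src tgt B').det := by
    refine aux_rlap_det_isUnit src tgt B' (fun e => ?_) hsimple (Finset.univ \ F)
      (fun e he => ?_) hnc
    · by_cases h : e ∈ F <;> simp [hB', h, (hB e).le]
    · have h : e ∉ F := (Finset.mem_sdiff.1 he).2
      simp [hB', h]
      exact (hB e).ne'
  set q : Fin (n + 1) → ℝ := Amat src tgt B *ᵥ p with hq
  have hqlast : q (Fin.last n) = 0 := by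
    rw [hq, aux_Amat_eq]
    exact aux_pad_mulVec_last _ _
  have hLq : lap src tgt B *ᵥ q = p := by
    rw [hq, aux_Amat_eq]
    exact aux_lap_pad_mulVec src tgt hsimple B hdet p hp
  have hAM := aux_AmatMinus_eq src tgt B F
  have hkey1 : AmatMinus src tgt B F *ᵥ (lap src tgt B' *ᵥ q) = q := by
    rw [hAM, aux_pad_lap_mulVec src tgt hsimple B' hdet' q]
    funext i
    rw [hqlast]
    ring
  set fF : {e : Fin m // e ∈ F} → ℝ := fun e => flowPre src tgt B p e.val with hfF
  have hCof : Cof src tgt F *ᵥ fF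
      = lap src tgt B *ᵥ q - lap src tgt B' *ᵥ q := by
    funext i
    rw [Pi.sub_apply]
    calc (Cof src tgt F *ᵥ fF) i
        = ∑ e : {e : Fin m // e ∈ F},
            incMat src tgt i e.val * (B e.val * (q (src e.val) - q (tgt e.val))) := by
          rw [aux_Cof_mulVec]
          refine Finset.sum_congr rfl fun e _ => ?_
          simp only [hfF]
          rw [aux_flowPre_apply src tgt B hsimple p e.val, ← hq]
      _ = ∑ e ∈ F, incMat src tgt i e * (B e * (q (src e) - q (tgt e))) :=
          (Finset.sum_subtype F (fun x => Iff.rfl)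
            (fun e => incMat src tgt i e * (B e * (q (src e) - q (tgt e))))).symm
      _ = ∑ e, (incMat src tgt i e * (B e * (q (src e) - q (tgt e)))
            - incMat src tgt i e * (B' e * (q (src e) - q (tgt e)))) := by
          rw [← Finset.sum_filter_add_sum_filter_not Finset.univ (· ∈ F)
            (fun e => incMat src tgt i e * (B e * (q (src e) - q (tgt e)))
              - incMat src tgt i e * (B' e * (q (src e) - q (tgt e))))]
          have h1 : ∀ e ∈ Finset.univ.filter (· ∈ F),
              incMat src tgt i e * (B e * (q (src e) - q (tgt e)))
                - incMat src tgt i e * (B' e * (q (src e) - q (tgt e)))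
              = incMat src tgt i e * (B e * (q (src e) - q (tgt e))) := by
            intro e he
            have hmem : e ∈ F := (Finset.mem_filter.1 he).2
            simp [hB', hmem]
          have h2 : ∀ e ∈ Finset.univ.filter (¬ · ∈ F),
              incMat src tgt i e * (B e * (q (src e) - q (tgt e)))
                - incMat src tgt i e * (B' e * (q (src e) - q (tgt e))) = 0 := by
            intro e he
            have hmem : e ∉ F := (Finset.mem_filter.1 he).2
            simp [hB', hmem]
          rw [Finset.sum_congr rfl h1, Finset.sum_congr rfl h2,
            Finset.sum_const_zero, add_zero]
          congr 1
          ext e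
          simp
      _ = (lap src tgt B *ᵥ q) i - (lap src tgt B' *ᵥ q) i := by
          rw [Finset.sum_sub_distrib,
            aux_lap_mulVec_apply src tgt hsimple B q i,
            aux_lap_mulVec_apply src tgt hsimple B' q i]
  have hy : AmatMinus src tgt B F *ᵥ (Cof src tgt F *ᵥ fF)
      = AmatMinus src tgt B F *ᵥ p - q := by
    rw [hCof, Matrix.mulVec_sub, hLq, hkey1]
  funext l
  rw [Pi.sub_apply]
  rw [aux_flowPost_apply src tgt B hsimple F p l,
    aux_flowPre_apply src tgt B hsimple p l.val, ← hq,
    aux_glodf_mulVec_apply src tgt B hsimple F fF l, hy]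
  simp only [Pi.sub_apply]
  ring
end

section
/- Invertibility for non-cut outages (Theorem 4, part 2, invertibility claim): If F ⊊ E is a non-cut set of edges of the connected graph G, then the |F|×|F| matrix I − D_{FF} = I − B_F·C_F^T·A·C_F is invertible, where B_F and C_F are the submatrices of diag(B) and C corresponding to the edges in F. -/
open Matrix Finset

variable {n m : ℕ}

/-! Deleting the reference row of `C_F` gives `Ĉ_F`, and removing the edges of `F` splits the
reduced Laplacian as `L̄ = L̄_{−F} + Ĉ_F B_F Ĉ_Fᵀ`, while `D_FF = B_F Ĉ_Fᵀ L̄⁻¹ Ĉ_F`. The matrix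
determinant lemma then gives `det L̄_{−F} = det L̄ · det (1 − D_FF)`. Both reduced Laplacians are
invertible because their graphs are connected: the quadratic form `Σ_e B_e (x_{src e} − x_{tgt e})²`
vanishes only on potentials constant along the edges, hence identically zero once the reference
node is grounded. -/

namespace Matrix

variable {α κ ι : Type*} [Fintype ι] [DecidableEq ι]

theorem mul_diagonal_mul_transpose_apply [CommSemiring α] (C : Matrix κ ι α) (b : ι → α)
    (i j : κ) : (C * diagonal b * Cᵀ) i j = ∑ e, C i e * b e * C j e := by
  simp only [mul_apply, transpose_apply, diagonal_apply, mul_ite, mul_zero, sum_ite_eq',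
    mem_univ, if_true]

theorem submatrix_mul_diagonal_mul_transpose [CommSemiring α] {κ' : Type*} (C : Matrix κ ι α)
    (b : ι → α) (f : κ' → κ) :
    (C * diagonal b * Cᵀ).submatrix f f =
      C.submatrix f id * diagonal b * (C.submatrix f id)ᵀ := by
  ext i j
  simp only [submatrix_apply, mul_diagonal_mul_transpose_apply, id]

theorem mul_diagonal_mul_transpose_eq_add [CommSemiring α] (C : Matrix κ ι α) (b : ι → α)
    (s : Finset ι) :
    C * diagonal b * Cᵀ =
      C.submatrix id (Subtype.val : s → ι) * diagonal (fun e : s => b e) *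
          (C.submatrix id Subtype.val : Matrix κ s α)ᵀ +
        C.submatrix id (Subtype.val : {e // e ∉ s} → ι) *
            diagonal (fun e : {e // e ∉ s} => b e) *
          (C.submatrix id Subtype.val : Matrix κ {e // e ∉ s} α)ᵀ := by
  ext i j
  simp only [add_apply, mul_diagonal_mul_transpose_apply, submatrix_apply, id]
  convert (Fintype.sum_subtype_add_sum_subtype (· ∈ s) fun e => C i e * b e * C j e).symm

theorem isUnit_mul_diagonal_mul_transpose [Fintype κ] [DecidableEq κ] (K : Matrix κ ι ℝ)
    {b : ι → ℝ} (hb : ∀ e, 0 < b e) (hK : Function.Injective K.vecMul) :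
    IsUnit (K * diagonal b * Kᵀ) := by
  rw [← conjTranspose_eq_transpose_of_trivial]
  exact ((posDef_diagonal_iff.mpr hb).mul_mul_conjTranspose_same hK).isUnit

theorem isUnit_one_sub_mul_inv_mul [CommRing α] [Fintype κ] [DecidableEq κ] {A : Matrix κ κ α}
    (U : Matrix κ ι α) (V : Matrix ι κ α) (hA : IsUnit A) (hAUV : IsUnit (A - U * V)) :
    IsUnit (1 - V * A⁻¹ * U) := by
  rw [isUnit_iff_isUnit_det] at hA hAUV ⊢
  rw [sub_eq_add_neg, ← Matrix.neg_mul, det_add_mul _ _ hA, Matrix.mul_neg, ← sub_eq_add_neg]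
    at hAUV
  exact isUnit_of_mul_isUnit_right hAUV

def padLast {R : Type*} [Zero R] (X : Matrix (Fin n) (Fin n) R) :
    Matrix (Fin (n + 1)) (Fin (n + 1)) R :=
  of fun i j =>
    if hi : i = Fin.last n then 0
    else if hj : j = Fin.last n then 0
    else X (i.castPred hi) (j.castPred hj)

theorem mul_padLast_mul {R κ' : Type*} [NonUnitalNonAssocSemiring R]
    (P : Matrix κ (Fin (n + 1)) R) (X : Matrix (Fin n) (Fin n) R)
    (Q : Matrix (Fin (n + 1)) κ' R) :
    P * padLast X * Q = P.submatrix id Fin.castSucc * X * Q.submatrix Fin.castSucc id := by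
  ext i j
  simp [mul_apply, padLast, Fin.sum_univ_castSucc, Fin.castSucc_ne_last]

end Matrix

theorem eq_of_vecMul_incMat_eq_zero {src tgt : Fin m → Fin (n + 1)} {x : Fin (n + 1) → ℝ}
    {e : Fin m} (h : (x ᵥ* incMat src tgt) e = 0) : x (src e) = x (tgt e) := by
  by_cases hst : src e = tgt e
  · rw [hst]
  · have : (x ᵥ* incMat src tgt) e = x (src e) - x (tgt e) := by
      simp [vecMul, dotProduct, incMat, mul_ite, sum_ite, filter_eq, hst, sub_eq_add_neg]
    linarith

theorem ConnectedOn.apply_eq {α : Type*} {src tgt : Fin m → Fin (n + 1)} {S : Finset (Fin m)}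
    (hS : ConnectedOn src tgt S) {x : Fin (n + 1) → α} (hx : ∀ e ∈ S, x (src e) = x (tgt e))
    (a b : Fin (n + 1)) : x a = x b := by
  induction hS a b with
  | refl => rfl
  | tail _ hadj ih =>
    obtain ⟨e, he, ⟨rfl, rfl⟩ | ⟨rfl, rfl⟩⟩ := hadj
    · exact ih.trans (hx e he)
    · exact ih.trans (hx e he).symm

theorem ConnectedOn.vecMul_submatrix_castSucc_injective {ι : Type*} [Fintype ι]
    {src tgt : Fin m → Fin (n + 1)} {S : Finset (Fin m)} (hS : ConnectedOn src tgt S)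
    (g : ι → Fin m) (hg : ↑S ⊆ Set.range g) :
    Function.Injective ((incMat src tgt).submatrix Fin.castSucc g).vecMul := by
  intro v w hvw
  rw [← sub_eq_zero]
  set u := v - w
  have hu : u ᵥ* (incMat src tgt).submatrix Fin.castSucc g = 0 := by
    rw [sub_vecMul]
    exact sub_eq_zero.mpr hvw
  set x : Fin (n + 1) → ℝ := Fin.snoc u 0
  have hx : ∀ e ∈ S, x (src e) = x (tgt e) := by
    intro e he
    obtain ⟨i, rfl⟩ := hg he
    refine eq_of_vecMul_incMat_eq_zero ?_
    calc (x ᵥ* incMat src tgt) (g i) = (u ᵥ* (incMat src tgt).submatrix Fin.castSucc g) i := by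
          simp [x, vecMul, dotProduct, Fin.sum_univ_castSucc]
      _ = 0 := congrFun hu i
  funext i
  simpa [x] using hS.apply_eq hx (Fin.castSucc i) (Fin.last n)

theorem ConnectedOn.isUnit_reducedLaplacian {ι : Type*} [Fintype ι] [DecidableEq ι]
    {src tgt : Fin m → Fin (n + 1)} {S : Finset (Fin m)} (hS : ConnectedOn src tgt S)
    (g : ι → Fin m) (hg : ↑S ⊆ Set.range g) {b : ι → ℝ} (hb : ∀ e, 0 < b e) :
    IsUnit (((incMat src tgt).submatrix id g * diagonal b *
      ((incMat src tgt).submatrix id g)ᵀ).submatrix Fin.castSucc Fin.castSucc) := by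
  rw [submatrix_mul_diagonal_mul_transpose]
  exact isUnit_mul_diagonal_mul_transpose _ hb (hS.vecMul_submatrix_castSucc_injective g hg)

theorem Amat_eq_padLast (src tgt : Fin m → Fin (n + 1)) (B : Fin m → ℝ) :
    Amat src tgt B = padLast (rlap src tgt B)⁻¹ := rfl

theorem rlap_eq_lapMinus_add (src tgt : Fin m → Fin (n + 1)) (B : Fin m → ℝ)
    (F : Finset (Fin m)) :
    rlap src tgt B = (lapMinus src tgt B F).submatrix Fin.castSucc Fin.castSucc +
      (Cof src tgt F).submatrix Fin.castSucc id * Bof B F *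
        ((Cof src tgt F).submatrix Fin.castSucc id)ᵀ := by
  rw [rlap, lap, mul_diagonal_mul_transpose_eq_add _ _ F, submatrix_add, Pi.add_apply,
    Pi.add_apply, add_comm]
  exact congrArg _ (submatrix_mul_diagonal_mul_transpose _ _ _)

theorem Dff_eq_mul_rlap_inv_mul (src tgt : Fin m → Fin (n + 1)) (B : Fin m → ℝ)
    (F : Finset (Fin m)) :
    Dff src tgt B F = Bof B F * ((Cof src tgt F).submatrix Fin.castSucc id)ᵀ *
      (rlap src tgt B)⁻¹ * (Cof src tgt F).submatrix Fin.castSucc id := by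
  rw [Dff, Amat_eq_padLast]
  simp only [Matrix.mul_assoc]
  rw [← Matrix.mul_assoc (Cof src tgt F)ᵀ, mul_padLast_mul, Matrix.mul_assoc]
  rfl

theorem non_cut_invertibility_general
    (src tgt : Fin m → Fin (n + 1)) (B : Fin m → ℝ)
    (hB : ∀ e, 0 < B e)
    (hconn : ConnectedOn src tgt Finset.univ)
    (F : Finset (Fin m))
    (hnc : ConnectedOn src tgt (Finset.univ \ F)) :
    IsUnit (1 - Dff src tgt B F) := by
  set K := (Cof src tgt F).submatrix Fin.castSucc id
  have hL : IsUnit (rlap src tgt B) :=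
    hconn.isUnit_reducedLaplacian id (by simp) hB
  have hLF : IsUnit (rlap src tgt B - K * (Bof B F * Kᵀ)) := by
    rw [← Matrix.mul_assoc, ← eq_sub_of_add_eq (rlap_eq_lapMinus_add src tgt B F).symm]
    exact hnc.isUnit_reducedLaplacian (Subtype.val : {e // e ∉ F} → Fin m)
      (fun e he => ⟨⟨e, (mem_sdiff.mp he).2⟩, rfl⟩) (hB ·)
  simpa only [Dff_eq_mul_rlap_inv_mul, Matrix.mul_assoc] using
    isUnit_one_sub_mul_inv_mul K _ hL hLF

/-- **Invertibility for non-cut outages, Theorem 4 part 2.**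
If `F` is a non-cut set of edges of a connected graph, then the matrix
`I − D_{FF} = I − B_F C_Fᵀ A C_F` is invertible. -/
theorem non_cut_invertibility
    (src tgt : Fin m → Fin (n + 1)) (B : Fin m → ℝ)
    (hB : ∀ e, 0 < B e)
    (hsimple : ∀ e, src e ≠ tgt e)
    (hconn : ConnectedOn src tgt Finset.univ)
    (F : Finset (Fin m)) (hF : F ⊂ Finset.univ)
    (hnc : ConnectedOn src tgt (Finset.univ \ F)) :
    IsUnit (1 - Dff src tgt B F) :=
  non_cut_invertibility_general src tgt B hB hconn F hnc
end
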